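/- arXiv:2503.07994 — 3 statements merged into one kernel-verified Lean document; each statement's English description precedes it below -/
import Mathlib

section
/- Let σ : ℝ → ℝ be strictly monotonic and twice differentiable with twice differentiable inverse, and let f : ℝⁿ → ℝ be twice differentiable. Then two features i, j are σ-separable (i.e., there exist functions f₁ of the variables excluding xᵢ and f₂ of the variables excluding xⱼ such that f(x) = σ(f₁(x₋ᵢ) + f₂(x₋ⱼ)) for all x) if and only if the mixed second partial derivative ∂²(σ⁻¹∘f)/∂xᵢ∂xⱼ vanishes identically on ℝⁿ. -/
/-- Partial derivative of `f` in coordinate `i` at `x`. -/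
noncomputable def pd {n : ℕ} (i : Fin n) (f : (Fin n → ℝ) → ℝ) (x : Fin n → ℝ) : ℝ :=
  deriv (fun t => f (Function.update x i t)) (x i)

/-- Mixed second partial derivative ∂²f/∂xᵢ∂xⱼ at `x`. -/
noncomputable def pd2 {n : ℕ} (i j : Fin n) (f : (Fin n → ℝ) → ℝ) (x : Fin n → ℝ) : ℝ :=
  pd j (fun y => pd i f y) x

/-- `f` does not depend on coordinate `i`. -/
def IndepOf {n : ℕ} (i : Fin n) (f : (Fin n → ℝ) → ℝ) : Prop :=
  ∀ x t, f (Function.update x i t) = f x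

lemma myHasDerivAt_update {n : ℕ} (x : Fin n → ℝ) (i : Fin n) (t : ℝ) :
    HasDerivAt (fun s => Function.update x i s) (Pi.single i (1:ℝ)) t := by
  rw [hasDerivAt_pi]
  intro k
  by_cases h : k = i
  · subst h
    simpa [Function.update_self, Pi.single_eq_same] using (hasDerivAt_id' t)
  · simpa [Function.update_of_ne h, Pi.single_eq_of_ne h] using hasDerivAt_const t (x k)

lemma hasDerivAt_comp_update {n : ℕ} {g : (Fin n → ℝ) → ℝ} (hg : Differentiable ℝ g)
    (x : Fin n → ℝ) (i : Fin n) (t : ℝ) :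
    HasDerivAt (fun s => g (Function.update x i s))
      (fderiv ℝ g (Function.update x i t) (Pi.single i 1)) t :=
  (hg _).hasFDerivAt.comp_hasDerivAt t (myHasDerivAt_update x i t)

lemma pd_eq_fderiv {n : ℕ} {g : (Fin n → ℝ) → ℝ} (hg : Differentiable ℝ g)
    (i : Fin n) (x : Fin n → ℝ) : pd i g x = fderiv ℝ g x (Pi.single i 1) := by
  have h := (hasDerivAt_comp_update hg x i (x i)).deriv
  simpa [pd, Function.update_eq_self] using h

lemma pd_differentiable {n : ℕ} {g : (Fin n → ℝ) → ℝ} (hg : ContDiff ℝ 2 g)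
    (i : Fin n) : Differentiable ℝ (pd i g) := by
  have h1 : ContDiff ℝ 1 (fderiv ℝ g) := hg.fderiv_right (by norm_num)
  have h2 : Differentiable ℝ (fun x => fderiv ℝ g x (Pi.single i 1)) :=
    (h1.clm_apply contDiff_const).differentiable one_ne_zero
  have hgd : Differentiable ℝ g := hg.differentiable (by norm_num)
  have : pd i g = fun x => fderiv ℝ g x (Pi.single i 1) := funext fun x => pd_eq_fderiv hgd i x
  rw [this]; exact h2

/-- If all `j`-partials of `h` vanish and `h` is differentiable, then `h` is indep of `j`. -/
lemma indep_of_pd_zero {n : ℕ} {h : (Fin n → ℝ) → ℝ} (hd : Differentiable ℝ h)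
    (j : Fin n) (hz : ∀ x, pd j h x = 0) : IndepOf j h := by
  intro x t
  have key : ∀ a b : ℝ, h (Function.update x j a) = h (Function.update x j b) := by
    have hdiff : Differentiable ℝ (fun s => h (Function.update x j s)) :=
      fun s => (hasDerivAt_comp_update hd x j s).differentiableAt
    have hder : ∀ s, deriv (fun s => h (Function.update x j s)) s = 0 := by
      intro s
      have h1 := (hasDerivAt_comp_update hd x j s).deriv
      rw [h1, ← pd_eq_fderiv hd j (Function.update x j s)]
      exact hz _
    exact fun a b => is_const_of_deriv_eq_zero hdiff hder a b
  have := key t (x j)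
  rwa [Function.update_eq_self] at this

/-- σ-separability criterion: features `i`,`j` are σ-separable iff the mixed second
partial of `σ⁻¹ ∘ f` vanishes identically. -/
theorem sigma_separable_iff_mixed_partial_vanishes
    {n : ℕ} (σ σinv : ℝ → ℝ) (f : (Fin n → ℝ) → ℝ) (i j : Fin n) (hij : i ≠ j)
    (hmono : StrictMono σ ∨ StrictAnti σ)
    (hσ : ContDiff ℝ 2 σ) (hσinv : ContDiff ℝ 2 σinv)
    (hleft : Function.LeftInverse σinv σ) (hright : Function.RightInverse σinv σ)
    (hf : ContDiff ℝ 2 f) :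
    (∃ f₁ f₂ : (Fin n → ℝ) → ℝ, IndepOf i f₁ ∧ IndepOf j f₂ ∧
        ∀ x, f x = σ (f₁ x + f₂ x)) ↔
      (∀ x, pd2 i j (fun y => σinv (f y)) x = 0) := by
  set g : (Fin n → ℝ) → ℝ := fun y => σinv (f y) with hg_def
  have hg : ContDiff ℝ 2 g := hσinv.comp hf
  have hgd : Differentiable ℝ g := hg.differentiable (by norm_num)
  constructor
  · rintro ⟨f₁, f₂, h₁, h₂, hsum⟩ x
    have hgsum : ∀ y, g y = f₁ y + f₂ y := by
      intro y; simp only [hg_def, hsum y, hleft (f₁ y + f₂ y)]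
    -- pd i g y = pd i f₂ y
    have hpdi : ∀ y, pd i g y = pd i f₂ y := by
      intro y
      have : (fun t => g (Function.update y i t))
          = fun t => f₁ y + f₂ (Function.update y i t) := by
        funext t; rw [hgsum, h₁ y t]
      simp only [pd, this, deriv_const_add]
    -- pd i f₂ is independent of j
    have hindep : ∀ y t, pd i f₂ (Function.update y j t) = pd i f₂ y := by
      intro y t
      have hcomm : ∀ s, Function.update (Function.update y j t) i s
          = Function.update (Function.update y i s) j t := fun s =>
        Function.update_comm hij.symm t s y
      have : (fun s => f₂ (Function.update (Function.update y j t) i s))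
          = fun s => f₂ (Function.update y i s) := by
        funext s; rw [hcomm s, h₂ (Function.update y i s) t]
      simp only [pd, this, Function.update_of_ne hij]
    have heq : (fun t => pd i g (Function.update x j t)) = fun _ => pd i f₂ x := by
      funext t; rw [hpdi, hindep]
    have hgoal : pd2 i j g x = deriv (fun t => pd i g (Function.update x j t)) (x j) := rfl
    rw [hgoal, heq, deriv_const]
  · intro hz
    -- define f₂ y := g with y_j set to 0, f₁ := g - f₂
    refine ⟨fun y => g y - g (Function.update y j 0), fun y => g (Function.update y j 0),
      ?_, ?_, ?_⟩
    · -- f₁ indep of i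
      -- first: pd i g is independent of j
      have hGi : Differentiable ℝ (pd i g) := pd_differentiable hg i
      have hGiIndep : IndepOf j (pd i g) := indep_of_pd_zero hGi j (fun x => hz x)
      intro x t
      -- the function φ s = f₁ (update x i s) has derivative zero
      have hdiff : Differentiable ℝ (fun s =>
          g (Function.update x i s) - g (Function.update (Function.update x j 0) i s)) :=
        fun s => ((hasDerivAt_comp_update hgd x i s).sub
          (hasDerivAt_comp_update hgd (Function.update x j 0) i s)).differentiableAt
      have hder : ∀ s, deriv (fun s =>
          g (Function.update x i s) - g (Function.update (Function.update x j 0) i s)) s = 0 := by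
        intro s
        rw [(show HasDerivAt (fun s =>
            g (Function.update x i s) - g (Function.update (Function.update x j 0) i s)) _ s from
          (hasDerivAt_comp_update hgd x i s).sub
          (hasDerivAt_comp_update hgd (Function.update x j 0) i s)).deriv]
        rw [← pd_eq_fderiv hgd i (Function.update x i s),
            ← pd_eq_fderiv hgd i (Function.update (Function.update x j 0) i s)]
        have hc : Function.update (Function.update x j 0) i s
            = Function.update (Function.update x i s) j 0 :=
          Function.update_comm hij.symm 0 s x
        rw [hc, hGiIndep (Function.update x i s) 0, sub_self]
      have key := is_const_of_deriv_eq_zero hdiff hder t (x i)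
      have hc2 : Function.update (Function.update x i t) j 0
          = Function.update (Function.update x j 0) i t :=
        Function.update_comm hij t 0 x
      have e : Function.update (Function.update x j 0) i (x i) = Function.update x j 0 := by
        conv_lhs => rw [show x i = Function.update x j 0 i from
          (Function.update_of_ne hij 0 x).symm]
        exact Function.update_eq_self _ _
      simp only []
      rw [hc2, key, e, Function.update_eq_self]
    · -- f₂ indep of j
      intro x t
      simp [Function.update_idem]
    · intro x
      have : g x - g (Function.update x j 0) + g (Function.update x j 0) = g x := by ring
      rw [this, hg_def, hright (f x)]
end

section
/- Let σ : ℝ → ℝ be strictly monotonic, and suppose f : ℝⁿ → ℝ admits a σ-division {A₁,…,A_m}, i.e., f(x) = σ(Σ_{k=1}^m f_k(x_{A_k})). Let (i, j) be a σ-separable pair of features with {i,j} ⊆ A_t for some t. Then the class obtained by replacing each A ∈ {A₁,…,A_m} containing both i and j with the two sets A∖{i} and A∖{j} is again a σ-division of f. -/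
/-- `g` depends only on coordinates in `A`. -/
def DependsOnlyOn {n : ℕ} (A : Finset (Fin n)) (g : (Fin n → ℝ) → ℝ) : Prop :=
  ∀ x y : Fin n → ℝ, (∀ k ∈ A, x k = y k) → g x = g y

/-- A class `𝒜` of feature subsets is a σ-division of `f` if there exist
sub-formulas `F A` depending only on the coordinates in `A` with
`f(x) = σ(Σ_{A ∈ 𝒜} F A (x))`. -/
def IsSigmaDivision {n : ℕ} (σ : ℝ → ℝ) (f : (Fin n → ℝ) → ℝ)
    (𝒜 : Finset (Finset (Fin n))) : Prop :=
  ∃ F : Finset (Fin n) → (Fin n → ℝ) → ℝ,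
    (∀ A ∈ 𝒜, DependsOnlyOn A (F A)) ∧
    ∀ x, f x = σ (∑ A ∈ 𝒜, F A x)

/-- Refinement of a σ-division by a σ-separable pair: replacing each member that
contains both `i` and `j` by the two sets obtained by deleting `i`, resp. `j`,
yields again a σ-division of `f`. -/
theorem sigma_division_refinement
    {n : ℕ} (σ : ℝ → ℝ) (f : (Fin n → ℝ) → ℝ)
    (hmono : StrictMono σ ∨ StrictAnti σ)
    (𝒜 : Finset (Finset (Fin n))) (hdiv : IsSigmaDivision σ f 𝒜)
    (i j : Fin n) (hij : i ≠ j)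
    (hsep : ∃ g₁ g₂ : (Fin n → ℝ) → ℝ, IndepOf i g₁ ∧ IndepOf j g₂ ∧
        ∀ x, f x = σ (g₁ x + g₂ x))
    (hmem : ∃ A ∈ 𝒜, i ∈ A ∧ j ∈ A) :
    IsSigmaDivision σ f
      ((𝒜.filter (fun A => ¬ (i ∈ A ∧ j ∈ A)))
        ∪ ((𝒜.filter (fun A => i ∈ A ∧ j ∈ A)).image (fun A => A.erase i))
        ∪ ((𝒜.filter (fun A => i ∈ A ∧ j ∈ A)).image (fun A => A.erase j))) := by
  classical
  obtain ⟨F, hF, hFf⟩ := hdiv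
  obtain ⟨g₁, g₂, hg₁, hg₂, hg⟩ := hsep
  have hinj : Function.Injective σ := hmono.elim StrictMono.injective StrictAnti.injective
  set B := 𝒜.filter (fun A => i ∈ A ∧ j ∈ A) with hBdef
  set C := 𝒜.filter (fun A => ¬ (i ∈ A ∧ j ∈ A)) with hCdef
  set 𝒟 := C ∪ B.image (fun A => A.erase i) ∪ B.image (fun A => A.erase j) with h𝒟def
  -- S x = g₁ x + g₂ x
  have hS : ∀ x, ∑ A ∈ 𝒜, F A x = g₁ x + g₂ x := fun x => hinj (by rw [← hFf, ← hg])
  -- the rectangle identity for S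
  have hR : ∀ x : Fin n → ℝ,
      ∑ A ∈ 𝒜, F A x
        = ∑ A ∈ 𝒜, F A (Function.update x i 0)
          + ∑ A ∈ 𝒜, F A (Function.update x j 0)
          - ∑ A ∈ 𝒜, F A (Function.update (Function.update x i 0) j 0) := by
    intro x
    rw [hS, hS, hS, hS]
    have h1 : g₁ (Function.update x i 0) = g₁ x := hg₁ x 0
    have h2 : g₂ (Function.update x j 0) = g₂ x := hg₂ x 0
    have h3 : g₂ (Function.update (Function.update x i 0) j 0) = g₂ (Function.update x i 0) :=
      hg₂ (Function.update x i 0) 0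
    have h4 : g₁ (Function.update (Function.update x i 0) j 0) = g₁ (Function.update x j 0) := by
      rw [Function.update_comm hij]
      exact hg₁ (Function.update x j 0) 0
    rw [h1, h2, h3, h4]
    ring
  -- new sub-formulas
  refine ⟨fun E x =>
    (if E ∈ C then F E x else 0)
    + ∑ A ∈ B.filter (fun A => A.erase i = E),
        (F A (Function.update x i 0) - F A (Function.update (Function.update x i 0) j 0))
    + ∑ A ∈ B.filter (fun A => A.erase j = E), F A (Function.update x j 0), ?_, ?_⟩
  · -- dependency
    intro E hE x y hxy
    have hxyi : ∀ A, A ∈ B.filter (fun A => A.erase i = E) →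
        (∀ k ∈ A, Function.update x i 0 k = Function.update y i 0 k) ∧
        (∀ k ∈ A, Function.update (Function.update x i 0) j 0 k
          = Function.update (Function.update y i 0) j 0 k) := by
      intro A hA
      obtain ⟨hAB, hAE⟩ := Finset.mem_filter.mp hA
      constructor
      · intro k hk
        by_cases hki : k = i
        · subst hki; simp
        · rw [Function.update_of_ne hki, Function.update_of_ne hki]
          exact hxy k (hAE ▸ Finset.mem_erase.mpr ⟨hki, hk⟩)
      · intro k hk
        by_cases hkj : k = j
        · subst hkj; simp
        · rw [Function.update_of_ne hkj, Function.update_of_ne hkj]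
          by_cases hki : k = i
          · subst hki; simp
          · rw [Function.update_of_ne hki, Function.update_of_ne hki]
            exact hxy k (hAE ▸ Finset.mem_erase.mpr ⟨hki, hk⟩)
    have e1 : (if E ∈ C then F E x else 0) = (if E ∈ C then F E y else 0) := by
      by_cases hEC : E ∈ C
      · rw [if_pos hEC, if_pos hEC]
        exact hF E (Finset.mem_of_mem_filter E hEC) x y hxy
      · rw [if_neg hEC, if_neg hEC]
    have e2 : ∑ A ∈ B.filter (fun A => A.erase i = E),
        (F A (Function.update x i 0) - F A (Function.update (Function.update x i 0) j 0))
        = ∑ A ∈ B.filter (fun A => A.erase i = E),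
        (F A (Function.update y i 0) - F A (Function.update (Function.update y i 0) j 0)) := by
      refine Finset.sum_congr rfl fun A hA => ?_
      obtain ⟨hAB, hAE⟩ := Finset.mem_filter.mp hA
      have hA𝒜 : A ∈ 𝒜 := Finset.mem_of_mem_filter A hAB
      rw [hF A hA𝒜 _ _ (hxyi A hA).1, hF A hA𝒜 _ _ (hxyi A hA).2]
    have e3 : ∑ A ∈ B.filter (fun A => A.erase j = E), F A (Function.update x j 0)
        = ∑ A ∈ B.filter (fun A => A.erase j = E), F A (Function.update y j 0) := by
      refine Finset.sum_congr rfl fun A hA => ?_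
      obtain ⟨hAB, hAE⟩ := Finset.mem_filter.mp hA
      have hA𝒜 : A ∈ 𝒜 := Finset.mem_of_mem_filter A hAB
      refine hF A hA𝒜 _ _ fun k hk => ?_
      by_cases hkj : k = j
      · subst hkj; simp
      · rw [Function.update_of_ne hkj, Function.update_of_ne hkj]
        exact hxy k (hAE ▸ Finset.mem_erase.mpr ⟨hkj, hk⟩)
    dsimp only
    rw [e1, e2, e3]
  · -- the sum identity
    intro x
    rw [hFf x]
    congr 1
    -- split the big sum
    rw [Finset.sum_add_distrib, Finset.sum_add_distrib]
    -- first part: indicator sum over C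
    have hCsub : C ⊆ 𝒟 := fun E hE =>
      Finset.mem_union_left _ (Finset.mem_union_left _ hE)
    have t1 : ∑ E ∈ 𝒟, (if E ∈ C then F E x else 0) = ∑ E ∈ C, F E x := by
      rw [← Finset.sum_filter]
      congr 1
      ext E
      simp only [Finset.mem_filter]
      exact ⟨fun h => h.2, fun h => ⟨hCsub h, h⟩⟩
    have t2 : ∑ E ∈ 𝒟, ∑ A ∈ B.filter (fun A => A.erase i = E),
        (F A (Function.update x i 0) - F A (Function.update (Function.update x i 0) j 0))
        = ∑ A ∈ B, (F A (Function.update x i 0)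
            - F A (Function.update (Function.update x i 0) j 0)) :=
      Finset.sum_fiberwise_of_maps_to (fun A hA =>
        Finset.mem_union_left _ (Finset.mem_union_right _ (Finset.mem_image_of_mem _ hA))) _
    have t3 : ∑ E ∈ 𝒟, ∑ A ∈ B.filter (fun A => A.erase j = E), F A (Function.update x j 0)
        = ∑ A ∈ B, F A (Function.update x j 0) :=
      Finset.sum_fiberwise_of_maps_to (fun A hA =>
        Finset.mem_union_right _ (Finset.mem_image_of_mem _ hA)) _
    rw [t1, t2, t3]
    -- split 𝒜 into B and C
    have hsplit : ∑ A ∈ 𝒜, F A x = ∑ A ∈ B, F A x + ∑ A ∈ C, F A x :=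
      (Finset.sum_filter_add_sum_filter_not 𝒜 _ _).symm
    -- termwise rectangle identity on C
    have hRC : ∀ A ∈ C, F A x - F A (Function.update x i 0) - F A (Function.update x j 0)
        + F A (Function.update (Function.update x i 0) j 0) = 0 := by
      intro A hA
      obtain ⟨hA𝒜, hAn⟩ := Finset.mem_filter.mp hA
      push_neg at hAn
      by_cases hiA : i ∈ A
      · have hjA : j ∉ A := hAn hiA
        have e1 : F A (Function.update x j 0) = F A x := by
          refine hF A hA𝒜 _ _ fun k hk => ?_
          have hkj : k ≠ j := by rintro rfl; exact hjA hk
          exact Function.update_of_ne hkj _ _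
        have e2 : F A (Function.update (Function.update x i 0) j 0)
            = F A (Function.update x i 0) := by
          refine hF A hA𝒜 _ _ fun k hk => ?_
          have hkj : k ≠ j := by rintro rfl; exact hjA hk
          exact Function.update_of_ne hkj _ _
        rw [e1, e2]; ring
      · have e1 : F A (Function.update x i 0) = F A x := by
          refine hF A hA𝒜 _ _ fun k hk => ?_
          have hki : k ≠ i := by rintro rfl; exact hiA hk
          exact Function.update_of_ne hki _ _
        have e2 : F A (Function.update (Function.update x i 0) j 0)
            = F A (Function.update x j 0) := by
          refine hF A hA𝒜 _ _ fun k hk => ?_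
          by_cases hkj : k = j
          · subst hkj; simp
          · rw [Function.update_of_ne hkj, Function.update_of_ne hkj]
            have hki : k ≠ i := by rintro rfl; exact hiA hk
            exact Function.update_of_ne hki _ _
        rw [e1, e2]; ring
    -- sum of rectangle terms over 𝒜 is zero
    have hR𝒜 : ∑ A ∈ 𝒜, (F A x - F A (Function.update x i 0) - F A (Function.update x j 0)
        + F A (Function.update (Function.update x i 0) j 0)) = 0 := by
      have := hR x
      rw [Finset.sum_add_distrib, Finset.sum_sub_distrib, Finset.sum_sub_distrib]
      linarith
    have hRB : ∑ A ∈ B, (F A x - F A (Function.update x i 0) - F A (Function.update x j 0)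
        + F A (Function.update (Function.update x i 0) j 0)) = 0 := by
      have hsplit2 := (Finset.sum_filter_add_sum_filter_not 𝒜
        (fun A => i ∈ A ∧ j ∈ A) (fun A => F A x - F A (Function.update x i 0)
          - F A (Function.update x j 0)
          + F A (Function.update (Function.update x i 0) j 0))).symm
      have hCzero : ∑ A ∈ C, (F A x - F A (Function.update x i 0)
          - F A (Function.update x j 0)
          + F A (Function.update (Function.update x i 0) j 0)) = 0 :=
        Finset.sum_eq_zero hRC
      rw [hsplit2] at hR𝒜
      rw [← hBdef, ← hCdef] at hR𝒜
      linarith [hR𝒜, hCzero]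
    have hBeq : ∑ A ∈ B, F A x
        = ∑ A ∈ B, (F A (Function.update x i 0)
            - F A (Function.update (Function.update x i 0) j 0))
          + ∑ A ∈ B, F A (Function.update x j 0) := by
      have h1 : ∑ A ∈ B, (F A x - F A (Function.update x i 0) - F A (Function.update x j 0)
          + F A (Function.update (Function.update x i 0) j 0))
          = ∑ A ∈ B, F A x - ∑ A ∈ B, F A (Function.update x i 0)
            - ∑ A ∈ B, F A (Function.update x j 0)
            + ∑ A ∈ B, F A (Function.update (Function.update x i 0) j 0) := by
        rw [Finset.sum_add_distrib, Finset.sum_sub_distrib, Finset.sum_sub_distrib]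
      have h2 : ∑ A ∈ B, (F A (Function.update x i 0)
          - F A (Function.update (Function.update x i 0) j 0))
          = ∑ A ∈ B, F A (Function.update x i 0)
            - ∑ A ∈ B, F A (Function.update (Function.update x i 0) j 0) :=
        Finset.sum_sub_distrib _ _
      rw [h1] at hRB
      rw [h2]
      linarith
    rw [hsplit, hBeq]
    ring
end

section
/- Let σ : ℝ → ℝ be strictly monotonic, {A_i}_{i=1}^m a σ-division of f : ℝⁿ → ℝ with f(x) = σ(Σ_{i=1}^m f_i(x_{A_i})), and z ∈ ℝⁿ a fixed reference point. Define surrogate sub-formulas g_i(x_{A_i}) = f(x_{A_i}, x_{Ā_i} = z_{Ā_i}), where Ā_i is the complement of A_i. For I ⊆ {1,…,m} let 𝒜_I = ∩_{i∈I} A_i. Then for all x ∈ ℝⁿ: f(x) = σ( Σ_{∅≠I⊆[m]} ((−1)^{|I|−1}/|I|) Σ_{i∈I} σ⁻¹(g_i(x_{𝒜_I}, x_{A_i∖𝒜_I} = z_{A_i∖𝒜_I})) ). -/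
/-- The point whose coordinates in `A` come from `x` and the rest from `z`. -/
def blend {n : ℕ} (A : Finset (Fin n)) (x z : Fin n → ℝ) : Fin n → ℝ :=
  fun k => if k ∈ A then x k else z k

/-- `𝒜_I = ∩_{i ∈ I} A i`. -/
def interFamily {n m : ℕ} (A : Fin m → Finset (Fin n)) (I : Finset (Fin m)) :
    Finset (Fin n) :=
  Finset.univ.filter (fun k => ∀ i ∈ I, k ∈ A i)

lemma sum_powerset_nonempty_insert {m : ℕ} (j : Fin m) (φ : Finset (Fin m) → ℝ) :
    ∑ I ∈ (Finset.univ : Finset (Fin m)).powerset.filter (fun I => I.Nonempty),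
      (-1 : ℝ) ^ (I.card - 1) * φ (insert j I) = φ {j} := by
  classical
  have h1 : ∑ I ∈ (Finset.univ : Finset (Fin m)).powerset,
      (-1 : ℝ) ^ (I.card - 1) * φ (insert j I)
      = (∑ I ∈ (Finset.univ : Finset (Fin m)).powerset.filter (fun I => I.Nonempty),
          (-1 : ℝ) ^ (I.card - 1) * φ (insert j I)) + φ {j} := by
    rw [← Finset.sum_filter_add_sum_filter_not
      ((Finset.univ : Finset (Fin m)).powerset) (fun I => I.Nonempty)]
    congr 1
    have he : (Finset.univ : Finset (Fin m)).powerset.filter (fun I => ¬ I.Nonempty)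
        = {∅} := by
      ext I; simp [Finset.not_nonempty_iff_eq_empty]
    rw [he, Finset.sum_singleton]
    simp
  have h2 : ∑ I ∈ (Finset.univ : Finset (Fin m)).powerset,
      (-1 : ℝ) ^ (I.card - 1) * φ (insert j I) = 2 * φ {j} := by
    have huniv : (Finset.univ : Finset (Fin m))
        = insert j ((Finset.univ : Finset (Fin m)).erase j) := by simp
    have hj : j ∉ (Finset.univ : Finset (Fin m)).erase j := Finset.notMem_erase _ _
    rw [huniv, Finset.sum_powerset_insert hj, ← Finset.sum_add_distrib]
    have hterm : ∀ I ∈ ((Finset.univ : Finset (Fin m)).erase j).powerset,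
        (-1 : ℝ) ^ (I.card - 1) * φ (insert j I)
          + (-1 : ℝ) ^ ((insert j I).card - 1) * φ (insert j (insert j I))
        = if I = ∅ then 2 * φ {j} else 0 := by
      intro I hI
      have hjI : j ∉ I := fun h =>
        hj (Finset.mem_powerset.mp hI h)
      rw [Finset.insert_idem, Finset.card_insert_of_notMem hjI]
      by_cases hIe : I = ∅
      · subst hIe; simp; ring
      · have hc : 1 ≤ I.card := Finset.card_pos.mpr (Finset.nonempty_iff_ne_empty.mpr hIe)
        rw [if_neg hIe]
        have : (I.card + 1 - 1) = (I.card - 1) + 1 := by omega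
        rw [this, pow_succ]
        ring
    rw [Finset.sum_congr rfl hterm, Finset.sum_ite_eq' _ ∅ (fun _ => 2 * φ {j})]
    simp
  linarith

/-- Back-aggregation theorem: the target formula `f` of a σ-division is recovered from
the surrogate sub-formulas `g i` by the alternating inclusion–exclusion formula. -/
theorem back_aggregation
    {n m : ℕ} (σ σinv : ℝ → ℝ)
    (hmono : StrictMono σ ∨ StrictAnti σ)
    (hleft : Function.LeftInverse σinv σ)
    (A : Fin m → Finset (Fin n)) (F : Fin m → (Fin n → ℝ) → ℝ)
    (hdep : ∀ i, DependsOnlyOn (A i) (F i))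
    (f : (Fin n → ℝ) → ℝ) (hf : ∀ x, f x = σ (∑ i, F i x))
    (z : Fin n → ℝ)
    (g : Fin m → (Fin n → ℝ) → ℝ)
    (hg : ∀ i x, g i x = f (blend (A i) x z)) :
    ∀ x, f x = σ (∑ I ∈ (Finset.univ : Finset (Fin m)).powerset.filter
        (fun I => I.Nonempty),
      ((-1 : ℝ) ^ (I.card - 1) / I.card) *
        ∑ i ∈ I, σinv (g i (blend (interFamily A I) x z))) := by
  classical
  intro x
  have hσinv_f : ∀ y, σinv (f y) = ∑ j, F j y := by
    intro y; rw [hf y, hleft]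
  have hblend : ∀ (I : Finset (Fin m)) i, i ∈ I →
      blend (A i) (blend (interFamily A I) x z) z = blend (interFamily A I) x z := by
    intro I i hi
    funext k
    by_cases hk : k ∈ A i
    · simp [blend, hk]
    · have hk2 : k ∉ interFamily A I := by
        simp only [interFamily, Finset.mem_filter, Finset.mem_univ, true_and]
        push_neg
        exact ⟨i, hi, hk⟩
      simp [blend, hk, hk2]
  have hterm : ∀ (I : Finset (Fin m)) i, i ∈ I →
      σinv (g i (blend (interFamily A I) x z)) =
      ∑ j, F j (blend (interFamily A I) x z) := by
    intro I i hi
    rw [hg, hblend I i hi, hσinv_f]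
  have hstep : ∀ I ∈ (Finset.univ : Finset (Fin m)).powerset.filter
      (fun I => I.Nonempty),
      ((-1 : ℝ) ^ (I.card - 1) / I.card) *
        ∑ i ∈ I, σinv (g i (blend (interFamily A I) x z))
      = ∑ j, (-1 : ℝ) ^ (I.card - 1) * F j (blend (interFamily A I) x z) := by
    intro I hI
    have hne : I.Nonempty := (Finset.mem_filter.mp hI).2
    have hc : (I.card : ℝ) ≠ 0 := by
      exact_mod_cast Finset.card_ne_zero_of_mem hne.choose_spec
    rw [Finset.sum_congr rfl (hterm I), Finset.sum_const, nsmul_eq_mul,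
      ← Finset.mul_sum]
    field_simp
  rw [Finset.sum_congr rfl hstep, Finset.sum_comm]
  have hcol : ∀ j : Fin m,
      ∑ I ∈ (Finset.univ : Finset (Fin m)).powerset.filter (fun I => I.Nonempty),
        (-1 : ℝ) ^ (I.card - 1) * F j (blend (interFamily A I) x z) = F j x := by
    intro j
    have hins : ∀ I : Finset (Fin m),
        F j (blend (interFamily A I) x z) =
        F j (blend (interFamily A (insert j I)) x z) := by
      intro I
      apply hdep j
      intro k hk
      have : k ∈ interFamily A I ↔ k ∈ interFamily A (insert j I) := by
        simp only [interFamily, Finset.mem_filter, Finset.mem_univ, true_and,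
          Finset.mem_insert]
        constructor
        · intro h i hi
          rcases hi with rfl | hi
          · exact hk
          · exact h i hi
        · intro h i hi; exact h i (Or.inr hi)
      simp only [blend]
      by_cases hkI : k ∈ interFamily A I
      · rw [if_pos hkI, if_pos (this.mp hkI)]
      · rw [if_neg hkI, if_neg (fun h => hkI (this.mpr h))]
    calc ∑ I ∈ (Finset.univ : Finset (Fin m)).powerset.filter (fun I => I.Nonempty),
          (-1 : ℝ) ^ (I.card - 1) * F j (blend (interFamily A I) x z)
        = ∑ I ∈ (Finset.univ : Finset (Fin m)).powerset.filter (fun I => I.Nonempty),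
          (-1 : ℝ) ^ (I.card - 1) * F j (blend (interFamily A (insert j I)) x z) := by
          exact Finset.sum_congr rfl (fun I _ => by rw [hins I])
      _ = F j (blend (interFamily A ({j} : Finset (Fin m))) x z) :=
          sum_powerset_nonempty_insert j
            (fun J => F j (blend (interFamily A J) x z))
      _ = F j x := by
          apply hdep j
          intro k hk
          have : k ∈ interFamily A ({j} : Finset (Fin m)) := by
            simp only [interFamily, Finset.mem_filter, Finset.mem_univ, true_and,
              Finset.mem_singleton]
            intro i hi; subst hi; exact hk
          simp [blend, this]
  rw [Finset.sum_congr rfl (fun j _ => hcol j), ← hf x]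
end
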